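/- With the operators e_i^∞ on F_n, the two-parameter Serre relation holds: for every i ∈ ℤ, (e_i^∞)^2 e_{i+1}^∞ − (r+s) e_i^∞ e_{i+1}^∞ e_i^∞ + rs · e_{i+1}^∞ (e_i^∞)^2 = 0 as operators on F_n. Moreover, since (e_i^∞)^2 = 0 and e_i^∞ e_{i+1}^∞ e_i^∞ = 0 on F_n, each of the three summands vanishes individually. -/

import Mathlib

/-!
The diagonals `k ↦ y k + k` of the columns of a diagram are strictly increasing, and a convex
corner on diagonal `i` sits at the unique column of diagonal `i - 1`. Applying `e_i` moves that
column `k` up, after which no column has diagonal `i - 1`, so `e_i² = 0`. In `e_i e_{i+1} e_i`,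
the convex corner on diagonal `i + 1` can only be at the same column `k` (now of diagonal `i`),
which `e_{i+1}` raises once more, and again no column has diagonal `i - 1`. The operators compose
as the underlying partial maps on diagrams, so each summand of the Serre relation vanishes.
-/

noncomputable section
open scoped Classical

abbrev K : Type := FractionRing (MvPolynomial (Fin 2) ℚ)

def rr : K := algebraMap (MvPolynomial (Fin 2) ℚ) K (MvPolynomial.X 0)
def ss : K := algebraMap (MvPolynomial (Fin 2) ℚ) K (MvPolynomial.X 1)

/-- An extended Young diagram of charge `n`: a weakly increasing integer sequence
eventually equal to `n`. -/
structure EYD (n : ℤ) where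
  y : ℕ → ℤ
  mono : ∀ k, y k ≤ y (k + 1)
  charge : ∃ N, ∀ k, N ≤ k → y k = n

namespace EYD

variable {n : ℤ}

/-- `Y` has a convex corner on diagonal `i` at column `k`. -/
def ConvexAt (Y : EYD n) (i : ℤ) (k : ℕ) : Prop :=
  Y.y k < Y.y (k + 1) ∧ Y.y k + k + 1 = i

/-- `Y` has a concave corner on diagonal `i` at column `k`. -/
def ConcaveAt (Y : EYD n) (i : ℤ) (k : ℕ) : Prop :=
  (k = 0 ∨ ∃ j, k = j + 1 ∧ Y.y j < Y.y k) ∧ Y.y k + k = i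

/-- Replace the convex corner at column `k` by a concave one. -/
def up (Y : EYD n) (k : ℕ) (h : Y.y k < Y.y (k + 1)) : EYD n where
  y := Function.update Y.y k (Y.y k + 1)
  mono := by
    intro m
    rcases eq_or_ne m k with rfl | h1
    · rw [Function.update_self, Function.update_of_ne (show m + 1 ≠ m by omega)]
      omega
    · rcases eq_or_ne (m + 1) k with h2 | h2
      · have hm := Y.mono m
        rw [Function.update_of_ne h1, h2, Function.update_self, ← h2]
        omega
      · rw [Function.update_of_ne h1, Function.update_of_ne h2]
        exact Y.mono m
  charge := by
    obtain ⟨N, hN⟩ := Y.charge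
    exact ⟨max N (k + 1), fun m hm => by
      rw [Function.update_of_ne (show m ≠ k by omega)]
      exact hN m (by omega)⟩

/-- Replace the concave corner at column `k` by a convex one. -/
def down (Y : EYD n) (k : ℕ) (h : k = 0 ∨ ∃ j, k = j + 1 ∧ Y.y j < Y.y k) : EYD n where
  y := Function.update Y.y k (Y.y k - 1)
  mono := by
    intro m
    rcases eq_or_ne m k with rfl | h1
    · rw [Function.update_self, Function.update_of_ne (show m + 1 ≠ m by omega)]
      have := Y.mono m
      omega
    · rcases eq_or_ne (m + 1) k with h2 | h2
      · rw [Function.update_of_ne h1, h2, Function.update_self]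
        rcases h with h | ⟨j, hj, hjy⟩
        · omega
        · have : j = m := by omega
          subst this
          omega
      · rw [Function.update_of_ne h1, Function.update_of_ne h2]
        exact Y.mono m
  charge := by
    obtain ⟨N, hN⟩ := Y.charge
    exact ⟨max N (k + 1), fun m hm => by
      rw [Function.update_of_ne (show m ≠ k by omega)]
      exact hN m (by omega)⟩

/-- The action of `e_i^∞` on a diagram: turn the convex corner on diagonal `i`
into a concave one, if any. -/
def eAct (i : ℤ) (Y : EYD n) : Option (EYD n) :=
  if h : ∃ k, Y.ConvexAt i k then some (Y.up h.choose h.choose_spec.1) else none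

/-- The action of `f_i^∞` on a diagram: turn the concave corner on diagonal `i`
into a convex one, if any. -/
def fAct (i : ℤ) (Y : EYD n) : Option (EYD n) :=
  if h : ∃ k, Y.ConcaveAt i k then some (Y.down h.choose h.choose_spec.1) else none

end EYD

/-- The Fock space of charge `n`. -/
abbrev Fock (n : ℤ) : Type := EYD n →₀ K

def ovec {n : ℤ} (o : Option (EYD n)) : Fock n :=
  o.elim 0 fun Y => Finsupp.single Y 1

/-- The linear operator on Fock space induced by a partially defined map on diagrams. -/
def opOf {n : ℤ} (a : EYD n → Option (EYD n)) : Fock n →ₗ[K] Fock n :=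
  Finsupp.lsum K fun Y => LinearMap.smulRight (LinearMap.id : K →ₗ[K] K) (ovec (a Y))

/-- A diagonal operator on Fock space. -/
def diagOp {n : ℤ} (c : EYD n → K) : Fock n →ₗ[K] Fock n :=
  Finsupp.lsum K fun Y => LinearMap.smulRight (LinearMap.id : K →ₗ[K] K) (c Y • Finsupp.single Y 1)

def Eop (n i : ℤ) : Fock n →ₗ[K] Fock n := opOf (EYD.eAct i)
def Fop (n i : ℤ) : Fock n →ₗ[K] Fock n := opOf (EYD.fAct i)

namespace EYD

variable {n : ℤ}

lemma diag_strictMono (Y : EYD n) : StrictMono fun k : ℕ => Y.y k + k :=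
  strictMono_nat_of_lt_succ fun k => by have := Y.mono k; push_cast; omega

lemma exists_of_eAct_eq_some {i : ℤ} {Y Z : EYD n} (h : eAct i Y = some Z) :
    ∃ k, Y.ConvexAt i k ∧ Z.y k = Y.y k + 1 ∧ ∀ m ≠ k, Z.y m = Y.y m := by
  unfold eAct at h
  split_ifs at h with hc
  cases h
  exact ⟨_, hc.choose_spec, Function.update_self .., fun m hm => Function.update_of_ne hm ..⟩

lemma eAct_eq_none {i : ℤ} {Y : EYD n} (h : ∀ k, ¬ Y.ConvexAt i k) : eAct i Y = none :=
  dif_neg (not_exists.2 h)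

lemma not_convexAt_of_eq_off_column {i : ℤ} {Y Z : EYD n} {k : ℕ} (hY : Y.ConvexAt i k)
    (hk : Z.y k ≠ Y.y k) (hZ : ∀ m ≠ k, Z.y m = Y.y m) (m : ℕ) : ¬ Z.ConvexAt i m := by
  rintro ⟨-, hm⟩
  obtain ⟨-, hki⟩ := hY
  by_cases hmk : m = k
  · subst hmk; omega
  · refine hmk (Y.diag_strictMono.injective ?_)
    show Y.y m + m = Y.y k + k
    rw [← hZ m hmk]
    omega

lemma bind_eAct_eAct (i : ℤ) (Y : EYD n) : (eAct i Y).bind (eAct i) = none := by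
  cases hZ : eAct i Y with
  | none => rfl
  | some Z =>
    obtain ⟨k, hk, hZk, hZm⟩ := exists_of_eAct_eq_some hZ
    exact eAct_eq_none (not_convexAt_of_eq_off_column hk (by omega) hZm)

lemma bind_eAct_succ_eAct (i : ℤ) (Y : EYD n) :
    ((eAct i Y).bind (eAct (i + 1))).bind (eAct i) = none := by
  cases hZ : eAct i Y with
  | none => rfl
  | some Z =>
    obtain ⟨k, hk, hZk, hZm⟩ := exists_of_eAct_eq_some hZ
    rw [Option.bind_some]
    cases hW : eAct (i + 1) Z with
    | none => rfl
    | some W =>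
      obtain ⟨k', hk', hWk', hWm⟩ := exists_of_eAct_eq_some hW
      have hkk' : k' = k := by
        refine Z.diag_strictMono.injective (show Z.y k' + k' = Z.y k + k from ?_)
        have := hk.2
        have := hk'.2
        omega
      subst hkk'
      refine eAct_eq_none (not_convexAt_of_eq_off_column hk (by omega) fun m hm => ?_)
      rw [hWm m hm, hZm m hm]

end EYD

lemma opOf_single {n : ℤ} (a : EYD n → Option (EYD n)) (Y : EYD n) (b : K) :
    opOf a (Finsupp.single Y b) = b • ovec (a Y) := by
  simp [opOf]

lemma opOf_ovec {n : ℤ} (a : EYD n → Option (EYD n)) (o : Option (EYD n)) :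
    opOf a (ovec o) = ovec (o.bind a) := by
  cases o <;> simp [ovec, opOf_single]

lemma opOf_comp_opOf {n : ℤ} (a b : EYD n → Option (EYD n)) :
    opOf a ∘ₗ opOf b = opOf fun Y => (b Y).bind a :=
  Finsupp.lhom_ext fun Y x => by simp [opOf_single, opOf_ovec]

lemma opOf_eq_zero {n : ℤ} {a : EYD n → Option (EYD n)} (h : ∀ Y, a Y = none) : opOf a = 0 :=
  Finsupp.lhom_ext fun Y x => by simp [opOf_single, h, ovec]

lemma Eop_comp_Eop_self (n i : ℤ) : Eop n i ∘ₗ Eop n i = 0 := by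
  rw [Eop, opOf_comp_opOf]
  exact opOf_eq_zero (EYD.bind_eAct_eAct i)

lemma Eop_comp_Eop_succ_comp_Eop (n i : ℤ) : Eop n i ∘ₗ Eop n (i + 1) ∘ₗ Eop n i = 0 := by
  simp only [Eop, opOf_comp_opOf]
  exact opOf_eq_zero (EYD.bind_eAct_succ_eAct i)

/-- The two-parameter Serre relation
`(e_i^∞)² e_{i+1}^∞ − (r+s) e_i^∞ e_{i+1}^∞ e_i^∞ + rs · e_{i+1}^∞ (e_i^∞)² = 0`
holds as operators on `F_n`; moreover each of the three summands vanishes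
individually, since `(e_i^∞)² = 0` and `e_i^∞ e_{i+1}^∞ e_i^∞ = 0` on `F_n`. -/
theorem stmt_14 (n i : ℤ) :
    (Eop n i ∘ₗ Eop n i ∘ₗ Eop n (i + 1))
        - (rr + ss) • (Eop n i ∘ₗ Eop n (i + 1) ∘ₗ Eop n i)
        + (rr * ss) • (Eop n (i + 1) ∘ₗ Eop n i ∘ₗ Eop n i) = 0 ∧
    Eop n i ∘ₗ Eop n i ∘ₗ Eop n (i + 1) = 0 ∧
    Eop n i ∘ₗ Eop n (i + 1) ∘ₗ Eop n i = 0 ∧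
    Eop n (i + 1) ∘ₗ Eop n i ∘ₗ Eop n i = 0 := by
  have hsq := Eop_comp_Eop_self n i
  have h1 : Eop n i ∘ₗ Eop n i ∘ₗ Eop n (i + 1) = 0 := by
    rw [← LinearMap.comp_assoc, hsq, LinearMap.zero_comp]
  have h2 := Eop_comp_Eop_succ_comp_Eop n i
  have h3 : Eop n (i + 1) ∘ₗ Eop n i ∘ₗ Eop n i = 0 := by rw [hsq, LinearMap.comp_zero]
  exact ⟨by rw [h1, h2, h3]; ext; simp, h1, h2, h3⟩
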